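/- Let Y be a compact metric space and P : C⁰(Y) → C⁰(Y) a positive bounded linear operator with a spectral gap at the simple dominant eigenvalue λ > 0, with continuous eigenfunction g ≥ 0 (Pg = λg) and eigenmeasure μ (P*μ = λμ, μ(g) = 1). Then for every bounded measurable h : Y → ℝ and every x with g(x) ≠ 0, the limit lim_{n→∞} [ (1/n) Σ_{i=0}^{n-1} Pⁱ(h · P^{n-i} 1)(x) ] / [ Pⁿ 1(x) ] equals ∫ h g dμ, where 1 denotes the constant function 1. -/

import Mathlib

open Filter Topology MeasureTheory

/-!
Put `uₖ = λ⁻ᵏ Pᵏ 1`; the spectral gap gives `|uₖ - v| ≤ C ρᵏ` with `v = μ(1) g`.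
After division by `λⁿ`, the `i`-th summand of the numerator is `λ⁻ⁱ Pⁱ(h · uₙ₋ᵢ)(x)`.
By positivity of `P`, replacing `uₙ₋ᵢ` by `v` there costs at most `‖h‖ C ρⁿ⁻ⁱ uᵢ(x)`,
and these errors sum to `O(1)`, which the Cesàro average kills. So the normalised
numerator has the mean-ergodic limit `μ(h v) g(x) = μ(1) μ(h g) g(x)`, while the normalised
denominator `uₙ(x)` tends to `μ(1) g(x) ≠ 0`.
-/

theorem sum_range_pow_sub_le_inv_one_sub {ρ : ℝ} (hρ0 : 0 ≤ ρ) (hρ1 : ρ < 1) (n : ℕ) :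
    ∑ i ∈ Finset.range n, ρ ^ (n - i) ≤ (1 - ρ)⁻¹ :=
  calc ∑ i ∈ Finset.range n, ρ ^ (n - i)
      ≤ ∑ i ∈ Finset.range n, ρ ^ (n - 1 - i) :=
        Finset.sum_le_sum fun i _ => pow_le_pow_of_le_one hρ0 hρ1.le (by omega)
    _ = ∑ i ∈ Finset.range n, ρ ^ i := Finset.sum_range_reflect (ρ ^ ·) n
    _ ≤ ρ ^ 0 / (1 - ρ) := by
      rw [Finset.range_eq_Ico]; exact geom_sum_Ico_le_of_lt_one hρ0 hρ1
    _ = (1 - ρ)⁻¹ := by rw [pow_zero, one_div]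

theorem tendsto_average_of_abs_sub_le_geometric {a : ℕ → ℕ → ℝ} {b : ℕ → ℝ} {L D ρ : ℝ}
    (hD : 0 ≤ D) (hρ0 : 0 ≤ ρ) (hρ1 : ρ < 1)
    (hab : ∀ n i, i < n → |a n i - b i| ≤ D * ρ ^ (n - i))
    (hb : Tendsto (fun n : ℕ => (n : ℝ)⁻¹ * ∑ i ∈ Finset.range n, b i) atTop (𝓝 L)) :
    Tendsto (fun n : ℕ => (n : ℝ)⁻¹ * ∑ i ∈ Finset.range n, a n i) atTop (𝓝 L) := by
  have hbound : Tendsto (fun n : ℕ => (n : ℝ)⁻¹ * (D * (1 - ρ)⁻¹)) atTop (𝓝 0) := by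
    simpa using (tendsto_inv_atTop_nhds_zero_nat (𝕜 := ℝ)).mul_const (D * (1 - ρ)⁻¹)
  refine hb.congr_dist (squeeze_zero (fun _ => dist_nonneg) (fun n => ?_) hbound)
  calc dist ((n : ℝ)⁻¹ * ∑ i ∈ Finset.range n, b i) ((n : ℝ)⁻¹ * ∑ i ∈ Finset.range n, a n i)
      = (n : ℝ)⁻¹ * |∑ i ∈ Finset.range n, (a n i - b i)| := by
        rw [Real.dist_eq, abs_sub_comm, ← mul_sub, abs_mul, abs_of_nonneg (by positivity),
          Finset.sum_sub_distrib]
    _ ≤ (n : ℝ)⁻¹ * ∑ i ∈ Finset.range n, D * ρ ^ (n - i) := by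
        gcongr
        exact (Finset.abs_sum_le_sum_abs _ _).trans
          (Finset.sum_le_sum fun i hi => hab n i (Finset.mem_range.1 hi))
    _ ≤ (n : ℝ)⁻¹ * (D * (1 - ρ)⁻¹) := by
        rw [← Finset.mul_sum]
        gcongr
        exact sum_range_pow_sub_le_inv_one_sub hρ0 hρ1 n

section PositiveOperator

variable {Y : Type*} {T : (Y → ℝ) →ₗ[ℝ] (Y → ℝ)}

theorem abs_le_one_add_of_abs_inv_pow_sub_le {lam : ℝ} {v : Y → ℝ} {C ρ : ℝ}
    (hv : ∀ k y, |(lam ^ k)⁻¹ * (T ^ k) (fun _ => 1) y - v y| ≤ C * ρ ^ k) (y : Y) :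
    |v y| ≤ 1 + C := by
  have h0 := hv 0 y
  simp only [pow_zero, inv_one, mul_one, Module.End.one_apply] at h0
  calc |v y| = |1 - (1 - v y)| := by rw [sub_sub_cancel]
    _ ≤ |1| + |1 - v y| := abs_sub _ _
    _ ≤ 1 + C := by rw [abs_one]; linarith

theorem pow_apply_nonneg_of_nonneg (hT : ∀ f : Y → ℝ, (∀ x, 0 ≤ f x) → ∀ x, 0 ≤ T f x)
    (n : ℕ) : ∀ f : Y → ℝ, (∀ x, 0 ≤ f x) → ∀ x, 0 ≤ (T ^ n) f x := by
  induction n with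
  | zero => exact fun f hf => hf
  | succ n ih =>
    intro f hf
    rw [pow_succ, Module.End.mul_apply]
    exact ih _ (hT f hf)

theorem apply_le_apply_of_le (hT : ∀ f : Y → ℝ, (∀ x, 0 ≤ f x) → ∀ x, 0 ≤ T f x)
    {f f' : Y → ℝ} (hff' : ∀ y, f y ≤ f' y) (x : Y) : T f x ≤ T f' x := by
  have := hT (f' - f) (fun y => sub_nonneg.2 (hff' y)) x
  rwa [map_sub, Pi.sub_apply, sub_nonneg] at this

theorem abs_apply_le_mul_apply_one (hT : ∀ f : Y → ℝ, (∀ x, 0 ≤ f x) → ∀ x, 0 ≤ T f x)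
    {f : Y → ℝ} {c : ℝ} (hf : ∀ y, |f y| ≤ c) (x : Y) :
    |T f x| ≤ c * T (fun _ => 1) x := by
  have hc : T (c • fun _ => 1) x = c * T (fun _ => 1) x := by simp
  rw [abs_le, ← hc, ← Pi.neg_apply, ← map_neg]
  exact ⟨apply_le_apply_of_le hT (fun y => by simpa using neg_le_of_abs_le (hf y)) x,
    apply_le_apply_of_le hT (fun y => by simpa using le_of_abs_le (hf y)) x⟩

theorem abs_inv_pow_apply_mul_pow_one_sub_le
    (hT : ∀ f : Y → ℝ, (∀ x, 0 ≤ f x) → ∀ x, 0 ≤ T f x)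
    {lam : ℝ} (hlam : 0 < lam) {v : Y → ℝ} {C ρ : ℝ}
    (hv : ∀ k y, |(lam ^ k)⁻¹ * (T ^ k) (fun _ => 1) y - v y| ≤ C * ρ ^ k)
    {h : Y → ℝ} {H : ℝ} (hH : ∀ y, |h y| ≤ H) (i k : ℕ) (x : Y) :
    |(lam ^ (i + k))⁻¹ * (T ^ i) (fun y => h y * (T ^ k) (fun _ => 1) y) x
        - (lam ^ i)⁻¹ * (T ^ i) (fun y => h y * v y) x|
      ≤ H * (C * ρ ^ k) * ((lam ^ i)⁻¹ * (T ^ i) (fun _ => 1) x) := by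
  set u : Y → ℝ := fun y => (lam ^ k)⁻¹ * (T ^ k) (fun _ => 1) y
  have hscale : (lam ^ (i + k))⁻¹ * (T ^ i) (fun y => h y * (T ^ k) (fun _ => 1) y) x
      = (lam ^ i)⁻¹ * (T ^ i) (fun y => h y * u y) x := by
    have : (fun y => h y * u y) = (lam ^ k)⁻¹ • fun y => h y * (T ^ k) (fun _ => 1) y := by
      ext y; simp only [u, Pi.smul_apply, smul_eq_mul]; ring
    rw [this, map_smul, Pi.smul_apply, smul_eq_mul, pow_add, mul_inv, mul_assoc]
  have hdiff : (T ^ i) (fun y => h y * u y) x - (T ^ i) (fun y => h y * v y) x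
      = (T ^ i) (fun y => h y * (u y - v y)) x := by
    have : (fun y => h y * (u y - v y)) = (fun y => h y * u y) - fun y => h y * v y := by
      ext y; simp only [Pi.sub_apply]; ring
    rw [this, map_sub, Pi.sub_apply]
  have herr : ∀ y, |h y * (u y - v y)| ≤ H * (C * ρ ^ k) := fun y => by
    rw [abs_mul]
    exact mul_le_mul (hH y) (hv k y) (abs_nonneg _) ((abs_nonneg _).trans (hH y))
  have hpow := abs_apply_le_mul_apply_one (pow_apply_nonneg_of_nonneg hT i) herr x
  rw [hscale, ← mul_sub, hdiff, abs_mul, abs_of_pos (inv_pos.2 (pow_pos hlam i)), mul_left_comm]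
  exact mul_le_mul_of_nonneg_left hpow (inv_pos.2 (pow_pos hlam i)).le

theorem tendsto_inv_pow_mul_average_apply_mul_pow_apply_one
    (hT : ∀ f : Y → ℝ, (∀ x, 0 ≤ f x) → ∀ x, 0 ≤ T f x)
    {lam : ℝ} (hlam : 0 < lam) {v : Y → ℝ} {C ρ : ℝ} (hC : 0 ≤ C) (hρ0 : 0 ≤ ρ) (hρ1 : ρ < 1)
    (hv : ∀ k y, |(lam ^ k)⁻¹ * (T ^ k) (fun _ => 1) y - v y| ≤ C * ρ ^ k)
    {h : Y → ℝ} {H : ℝ} (hH : ∀ y, |h y| ≤ H) {x : Y} {L : ℝ}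
    (hmean : Tendsto (fun n : ℕ => (n : ℝ)⁻¹ * ∑ i ∈ Finset.range n,
      (lam ^ i)⁻¹ * (T ^ i) (fun y => h y * v y) x) atTop (𝓝 L)) :
    Tendsto (fun n : ℕ => (lam ^ n)⁻¹ * ((n : ℝ)⁻¹ * ∑ i ∈ Finset.range n,
      (T ^ i) (fun y => h y * (T ^ (n - i)) (fun _ => 1) y) x)) atTop (𝓝 L) := by
  have hH0 : 0 ≤ H := (abs_nonneg _).trans (hH x)
  have hterm : ∀ n i, i < n →
      |(lam ^ n)⁻¹ * (T ^ i) (fun y => h y * (T ^ (n - i)) (fun _ => 1) y) x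
        - (lam ^ i)⁻¹ * (T ^ i) (fun y => h y * v y) x|
        ≤ H * C * (|v x| + C) * ρ ^ (n - i) := by
    intro n i hi
    obtain ⟨k, rfl⟩ := Nat.exists_eq_add_of_le hi.le
    have hu : (lam ^ i)⁻¹ * (T ^ i) (fun _ => 1) x ≤ |v x| + C := by
      nlinarith [(abs_le.1 (hv i x)).2, le_abs_self (v x), pow_le_one₀ hρ0 hρ1.le (n := i)]
    rw [Nat.add_sub_cancel_left]
    calc _ ≤ H * (C * ρ ^ k) * ((lam ^ i)⁻¹ * (T ^ i) (fun _ => 1) x) :=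
          abs_inv_pow_apply_mul_pow_one_sub_le hT hlam hv hH i k x
      _ ≤ H * (C * ρ ^ k) * (|v x| + C) := by gcongr
      _ = H * C * (|v x| + C) * ρ ^ k := by ring
  simpa only [Finset.mul_sum, mul_left_comm (lam ^ _)⁻¹] using
    tendsto_average_of_abs_sub_le_geometric (by positivity) hρ0 hρ1 hterm hmean

end PositiveOperator

theorem stmt2_general {Y : Type*} [MetricSpace Y] [MeasurableSpace Y] [BorelSpace Y]
    (P : (Y → ℝ) →ₗ[ℝ] (Y → ℝ))
    (hpos : ∀ h : Y → ℝ, (∀ x, 0 ≤ h x) → ∀ x, 0 ≤ P h x)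
    (lam : ℝ) (hlam : 0 < lam)
    (g : Y → ℝ) (hgc : Continuous g)
    (μ : Measure Y) [IsFiniteMeasure μ]
    (hμg : ∫ x, g x ∂μ = 1)
    (hconv : ∀ f : Y → ℝ, Measurable f → (∃ C, ∀ x, |f x| ≤ C) →
      ∃ C > (0:ℝ), ∃ ρ : ℝ, 0 ≤ ρ ∧ ρ < 1 ∧ ∀ n : ℕ, ∀ x : Y,
        |(lam ^ n)⁻¹ * (P ^ n) f x - (∫ y, f y ∂μ) * g x| ≤ C * ρ ^ n)
    (hmean : ∀ f : Y → ℝ, Measurable f → (∃ C, ∀ x, |f x| ≤ C) → ∀ x : Y,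
      Tendsto (fun n : ℕ => (n : ℝ)⁻¹ * ∑ i ∈ Finset.range n, (lam ^ i)⁻¹ * (P ^ i) f x)
        atTop (𝓝 ((∫ y, f y ∂μ) * g x)))
    (h : Y → ℝ) (hh : Measurable h) (hhb : ∃ C, ∀ x, |h x| ≤ C)
    (x : Y) (hx : g x ≠ 0) :
    Tendsto (fun n : ℕ =>
        ((n : ℝ)⁻¹ * ∑ i ∈ Finset.range n,
            (P ^ i) (fun y => h y * (P ^ (n - i)) (fun _ => (1:ℝ)) y) x)
          / ((P ^ n) (fun _ => (1:ℝ)) x))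
      atTop (𝓝 (∫ y, h y * g y ∂μ)) := by
  obtain ⟨H, hH⟩ := hhb
  obtain ⟨C, hC, ρ, hρ0, hρ1, hv⟩ := hconv (fun _ => 1) measurable_const ⟨1, fun _ => by simp⟩
  set m := ∫ _, (1:ℝ) ∂μ
  have hm : m ≠ 0 := by
    have : NeZero μ := ⟨by rintro rfl; simp at hμg⟩
    simpa [m] using (measureReal_univ_pos (μ := μ)).ne'
  have hv_bdd : ∀ y, |h y * (m * g y)| ≤ H * (1 + C) := fun y => by
    rw [abs_mul]
    exact mul_le_mul (hH y) (abs_le_one_add_of_abs_inv_pow_sub_le hv y) (abs_nonneg _)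
      ((abs_nonneg _).trans (hH y))
  have hnum := tendsto_inv_pow_mul_average_apply_mul_pow_apply_one hpos hlam hC.le hρ0 hρ1 hv hH
    (hmean (fun y => h y * (m * g y)) (hh.mul (measurable_const.mul hgc.measurable)) ⟨_, hv_bdd⟩ x)
  have hden : Tendsto (fun n => (lam ^ n)⁻¹ * (P ^ n) (fun _ => 1) x) atTop (𝓝 (m * g x)) :=
    tendsto_iff_norm_sub_tendsto_zero.2 (squeeze_zero (fun _ => norm_nonneg _) (fun n => hv n x)
      (by simpa using (tendsto_pow_atTop_nhds_zero_of_lt_one hρ0 hρ1).const_mul C))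
  have hlim : (∫ y, h y * (m * g y) ∂μ) * g x / (m * g x) = ∫ y, h y * g y ∂μ := by
    simp_rw [mul_left_comm (h _) m, integral_const_mul]
    field_simp
  rw [← hlim]
  refine (hnum.div hden (mul_ne_zero hm hx)).congr fun n => ?_
  exact mul_div_mul_left _ _ (inv_ne_zero (pow_ne_zero n hlam.ne'))

/-- Quasi-ergodic limit of conditioned Birkhoff averages.  `P` is a positive
operator on functions over a compact metric space `Y`, with a spectral gap at the simple
dominant eigenvalue `lam > 0`, continuous eigenfunction `g ≥ 0` and eigenmeasure `μ`
(`P*μ = lam μ`, `μ(g) = 1`); the spectral gap is encoded, as in the paper, by exponentially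
fast uniform convergence `(1/lamⁿ)Pⁿ f → μ(f)g` and mean ergodicity of `P/lam` on bounded
measurable functions.  Then for every bounded measurable `h` and every `x` with `g x ≠ 0`,
`(1/n) Σ_{i<n} Pⁱ(h · P^{n−i}1)(x) / Pⁿ1(x) → ∫ h g dμ`. -/
theorem stmt2 {Y : Type*} [MetricSpace Y] [CompactSpace Y] [MeasurableSpace Y] [BorelSpace Y]
    (P : (Y → ℝ) →ₗ[ℝ] (Y → ℝ))
    (hP_bm : ∀ h : Y → ℝ, Measurable h → (∃ C, ∀ x, |h x| ≤ C) →
      Measurable (P h) ∧ ∃ C, ∀ x, |P h x| ≤ C)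
    (hpos : ∀ h : Y → ℝ, (∀ x, 0 ≤ h x) → ∀ x, 0 ≤ P h x)
    (lam : ℝ) (hlam : 0 < lam)
    (g : Y → ℝ) (hgc : Continuous g) (hgpos : ∀ x, 0 ≤ g x) (hgeig : P g = lam • g)
    (μ : Measure Y) [IsFiniteMeasure μ]
    (hμeig : ∀ f : Y → ℝ, Continuous f → ∫ x, P f x ∂μ = lam * ∫ x, f x ∂μ)
    (hμg : ∫ x, g x ∂μ = 1)
    (hconv : ∀ f : Y → ℝ, Measurable f → (∃ C, ∀ x, |f x| ≤ C) →
      ∃ C > (0:ℝ), ∃ ρ : ℝ, 0 ≤ ρ ∧ ρ < 1 ∧ ∀ n : ℕ, ∀ x : Y,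
        |(lam ^ n)⁻¹ * (P ^ n) f x - (∫ y, f y ∂μ) * g x| ≤ C * ρ ^ n)
    (hmean : ∀ f : Y → ℝ, Measurable f → (∃ C, ∀ x, |f x| ≤ C) → ∀ x : Y,
      Tendsto (fun n : ℕ => (n : ℝ)⁻¹ * ∑ i ∈ Finset.range n, (lam ^ i)⁻¹ * (P ^ i) f x)
        atTop (𝓝 ((∫ y, f y ∂μ) * g x)))
    (h : Y → ℝ) (hh : Measurable h) (hhb : ∃ C, ∀ x, |h x| ≤ C)
    (x : Y) (hx : g x ≠ 0) :
    Tendsto (fun n : ℕ =>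
        ((n : ℝ)⁻¹ * ∑ i ∈ Finset.range n,
            (P ^ i) (fun y => h y * (P ^ (n - i)) (fun _ => (1:ℝ)) y) x)
          / ((P ^ n) (fun _ => (1:ℝ)) x))
      atTop (𝓝 (∫ y, h y * g y ∂μ)) :=
  stmt2_general P hpos lam hlam g hgc μ hμg hconv hmean h hh hhb x hx
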